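/- arXiv:cs/0110025 — 2 statements merged into one kernel-verified Lean document; each statement's English description precedes it below -/
import Mathlib

section
/- Let G be a finite simple graph and let H be the ED-gadget graph of G. Then min-ed(H) = mvc(H), i.e., H possesses a maximal matching M with 2·|M| = mvc(H); in fact min-ed(H) = 2·(mvc(G) + |V(G)|). -/
open scoped Classical

noncomputable section

/-- `C` is a vertex cover of `G`: every edge has an endpoint in `C`. -/
def IsVC {V : Type*} (G : SimpleGraph V) (C : Finset V) : Prop :=
  ∀ ⦃u w : V⦄, G.Adj u w → u ∈ C ∨ w ∈ C

/-- `mvc G` is the minimum size of a vertex cover of `G`. -/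
def mvc {V : Type*} [Fintype V] (G : SimpleGraph V) : ℕ :=
  sInf {n | ∃ C : Finset V, IsVC G C ∧ C.card = n}

/-- `M` is a matching of `G` (a set of pairwise disjoint edges of `G`). -/
def IsMatchingSet {V : Type*} (G : SimpleGraph V) (M : Finset (Sym2 V)) : Prop :=
  (∀ e ∈ M, e ∈ G.edgeSet) ∧
    ∀ e ∈ M, ∀ f ∈ M, e ≠ f → ∀ v, v ∈ e → v ∉ f

/-- `M` is a maximal matching of `G`: no edge of `G` can be added to it. -/
def IsMaximalMatchingSet {V : Type*} (G : SimpleGraph V) (M : Finset (Sym2 V)) : Prop :=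
  IsMatchingSet G M ∧ ∀ e ∈ G.edgeSet, e ∉ M → ¬ IsMatchingSet G (insert e M)

/-- `minEd G` is the minimum of `2·|M|` over all maximal matchings `M` of `G`
(the minimum size of a vertex cover producible by the edge deletion heuristic). -/
def minEd {V : Type*} [Fintype V] (G : SimpleGraph V) : ℕ :=
  sInf {n | ∃ M : Finset (Sym2 V), IsMaximalMatchingSet G M ∧ n = 2 * M.card}

/-- Degree of `v` inside the induced subgraph on the vertex set `S`. -/
def degIn {V : Type*} (G : SimpleGraph V) (S : Finset V) (v : V) : ℕ :=
  (S.filter fun w => G.Adj v w).card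

/-- An MDG run: a sequence of vertices, each of maximum degree in the currently
remaining induced subgraph, whose removal leaves no edges. -/
def IsMDGRun {V : Type*} (G : SimpleGraph V) : List V → Finset V → Prop
  | [], S => ∀ u ∈ S, ∀ w ∈ S, ¬ G.Adj u w
  | v :: L, S => v ∈ S ∧ (∀ u ∈ S, degIn G S u ≤ degIn G S v) ∧ IsMDGRun G L (S.erase v)

/-- `minMdg G`: minimum length of an MDG run on `G` (minimum size of a vertex cover
producible by the maximum-degree greedy heuristic). -/
def minMdg {V : Type*} [Fintype V] (G : SimpleGraph V) : ℕ :=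
  sInf {k | ∃ L : List V, L.length = k ∧ IsMDGRun G L Finset.univ}

/-- The edge relation of the 4-vertex ED gadget: edges {v₁,v₂}, {v₃,v₄}, {v₁,v₃}
(on indices 0,1,2,3). -/
def gadgetRel (i j : Fin 4) : Prop :=
  s(i, j) = s(0, 1) ∨ s(i, j) = s(2, 3) ∨ s(i, j) = s(0, 2)

lemma gadgetRel_symm {i j : Fin 4} (h : gadgetRel i j) : gadgetRel j i := by
  unfold gadgetRel at h ⊢
  rwa [Sym2.eq_swap]

lemma gadgetRel_irrefl (i : Fin 4) : ¬ gadgetRel i i := by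
  rintro (h | h | h) <;>
    (rw [Sym2.eq_iff] at h; rcases h with ⟨h1, h2⟩ | ⟨h1, h2⟩ <;> simp_all)

/-- The ED-gadget graph of `G`: four copies `v₁,…,v₄` of each vertex, gadget edges
inside each copy, and all 16 edges `{aᵢ,bⱼ}` for each edge `{a,b}` of `G`. -/
def edGadget {V : Type*} (G : SimpleGraph V) : SimpleGraph (V × Fin 4) where
  Adj x y := (x.1 = y.1 ∧ gadgetRel x.2 y.2) ∨ G.Adj x.1 y.1
  symm := by
    constructor
    rintro ⟨a, i⟩ ⟨b, j⟩ (⟨h1, h2⟩ | h)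
    · exact Or.inl ⟨h1.symm, gadgetRel_symm h2⟩
    · exact Or.inr h.symm
  loopless := by
    constructor
    rintro ⟨a, i⟩ (⟨-, h2⟩ | h)
    · exact gadgetRel_irrefl i h2
    · exact G.irrefl h

/-- The join of two vertex-disjoint graphs. -/
def graphJoin {α β : Type*} (G : SimpleGraph α) (H : SimpleGraph β) :
    SimpleGraph (α ⊕ β) where
  Adj x y :=
    match x, y with
    | .inl a, .inl b => G.Adj a b
    | .inr a, .inr b => H.Adj a b
    | _, _ => True
  symm := by
    constructor
    rintro (a | a) (b | b) h
    · exact h.symm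
    · exact trivial
    · exact trivial
    · exact h.symm
  loopless := by
    constructor
    rintro (a | a) h
    · exact G.irrefl h
    · exact H.irrefl h

/-- The disjoint union of two vertex-disjoint graphs. -/
def graphUnion {α β : Type*} (G : SimpleGraph α) (H : SimpleGraph β) :
    SimpleGraph (α ⊕ β) where
  Adj x y :=
    match x, y with
    | .inl a, .inl b => G.Adj a b
    | .inr a, .inr b => H.Adj a b
    | _, _ => False
  symm := by
    constructor
    rintro (a | a) (b | b) h
    · exact h.symm
    · exact h.elim
    · exact h.elim
    · exact h.symm
  loopless := by
    constructor
    rintro (a | a) h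
    · exact G.irrefl h
    · exact H.irrefl h

/-- Adjacency of the MDG-gadget graph: the gadget vertex `uᵢᵉ` for `e = {u,v}` is
encoded as `Sum.inr (⟨(u,v), _⟩, i)`.  Edges: `{uᵢᵉ, vⱼᵉ}` for all `i, j`, plus
`{u, u₁ᵉ}` and `{v, v₁ᵉ}`. -/
def mdgAdj {V : Type*} (G : SimpleGraph V) (Δ : ℕ) :
    (V ⊕ ({p : V × V // G.Adj p.1 p.2} × Fin (Δ + 1))) →
      (V ⊕ ({p : V × V // G.Adj p.1 p.2} × Fin (Δ + 1))) → Prop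
  | .inl _, .inl _ => False
  | .inl u, .inr (⟨(a, _), _⟩, i) => u = a ∧ i = 0
  | .inr (⟨(a, _), _⟩, i), .inl u => u = a ∧ i = 0
  | .inr (⟨(a, b), _⟩, _), .inr (⟨(c, d), _⟩, _) => a = d ∧ b = c

/-- The MDG-gadget graph of `G` with parameter `Δ`. -/
def mdgGadget {V : Type*} (G : SimpleGraph V) (Δ : ℕ) :
    SimpleGraph (V ⊕ ({p : V × V // G.Adj p.1 p.2} × Fin (Δ + 1))) where
  Adj := mdgAdj G Δ
  symm := by
    constructor
    rintro (u | ⟨⟨⟨a, b⟩, hab⟩, i⟩) (v | ⟨⟨⟨c, d⟩, hcd⟩, j⟩) h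
    · exact h.elim
    · exact h
    · exact h
    · exact ⟨h.2.symm, h.1.symm⟩
  loopless := by
    constructor
    rintro (u | ⟨⟨⟨a, b⟩, hab⟩, i⟩) h
    · exact h.elim
    · exact G.ne_of_adj hab h.1

/-- The endpoints of a maximal matching form a vertex cover of size at most `2·|M|`. -/
lemma endpoint_vc {W : Type*} [Fintype W] (H : SimpleGraph W) (M : Finset (Sym2 W))
    (hM : IsMaximalMatchingSet H M) :
    ∃ C : Finset W, IsVC H C ∧ C.card ≤ 2 * M.card := by
  classical
  refine ⟨M.biUnion fun e => Finset.univ.filter (· ∈ e), ?_, ?_⟩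
  · intro u w huw
    by_contra hcon
    push_neg at hcon
    obtain ⟨hu, hw⟩ := hcon
    simp only [Finset.mem_biUnion, Finset.mem_filter, Finset.mem_univ, true_and,
      not_exists, not_and] at hu hw
    have heM : s(u, w) ∉ M := fun h => hu _ h (Sym2.mem_mk_left u w)
    refine hM.2 s(u, w) (H.mem_edgeSet.mpr huw) heM ⟨?_, ?_⟩
    · intro e he
      rcases Finset.mem_insert.mp he with rfl | he
      · exact H.mem_edgeSet.mpr huw
      · exact hM.1.1 e he
    · intro e he f hf hef v hv
      rcases Finset.mem_insert.mp he with rfl | heM'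
      · rcases Finset.mem_insert.mp hf with rfl | hfM'
        · exact absurd rfl hef
        · rcases Sym2.mem_iff.mp hv with rfl | rfl
          · exact fun h => hu _ hfM' h
          · exact fun h => hw _ hfM' h
      · rcases Finset.mem_insert.mp hf with rfl | hfM'
        · intro hvf
          rcases Sym2.mem_iff.mp hvf with rfl | rfl
          · exact hu _ heM' hv
          · exact hw _ heM' hv
        · exact hM.1.2 e heM' f hfM' hef v hv
  · have h2 : ∀ e : Sym2 W, (Finset.univ.filter (· ∈ e)).card ≤ 2 := by
      intro e
      induction e using Sym2.ind with
      | _ x y =>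
        have hsub : Finset.univ.filter (· ∈ s(x, y)) ⊆ {x, y} := by
          intro z hz
          simp only [Finset.mem_filter, Sym2.mem_iff] at hz
          simpa using hz.2
        exact le_trans (Finset.card_le_card hsub)
          (le_trans (Finset.card_insert_le _ _) (by simp))
    refine le_trans Finset.card_biUnion_le
      (le_trans (Finset.sum_le_sum fun e _ => h2 e) ?_)
    rw [Finset.sum_const, smul_eq_mul, mul_comm]

/-- Every vertex cover of the ED-gadget graph has size at least `2·(mvc G + |V|)`. -/
lemma edGadget_vc_lower {V : Type*} [Fintype V] (G : SimpleGraph V)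
    (D : Finset (V × Fin 4)) (hD : IsVC (edGadget G) D) :
    2 * (mvc G + Fintype.card V) ≤ D.card := by
  classical
  set C' : Finset V := Finset.univ.filter (fun v => ∀ i : Fin 4, (v, i) ∈ D) with hC'
  have hC'vc : IsVC G C' := by
    intro a b hab
    by_contra hcon
    push_neg at hcon
    obtain ⟨ha, hb⟩ := hcon
    simp only [hC', Finset.mem_filter, Finset.mem_univ, true_and, not_forall] at ha hb
    obtain ⟨i, hi⟩ := ha
    obtain ⟨j, hj⟩ := hb
    rcases hD (show (edGadget G).Adj (a, i) (b, j) from Or.inr hab) with h | h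
    · exact hi h
    · exact hj h
  have hk : mvc G ≤ C'.card := Nat.sInf_le ⟨C', hC'vc, rfl⟩
  have hfib : D.card = ∑ v : V, (D.filter fun x => x.1 = v).card :=
    Finset.card_eq_sum_card_fiberwise (fun x _ => Finset.mem_univ x.1)
  have hbig : ∀ v ∈ C', 4 ≤ (D.filter fun x => x.1 = v).card := by
    intro v hv
    simp only [hC', Finset.mem_filter, Finset.mem_univ, true_and] at hv
    have hsub : (Finset.univ.image fun i : Fin 4 => (v, i)) ⊆ D.filter fun x => x.1 = v := by
      intro x hx
      simp only [Finset.mem_image, Finset.mem_univ, true_and] at hx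
      obtain ⟨i, rfl⟩ := hx
      exact Finset.mem_filter.mpr ⟨hv i, rfl⟩
    have hle := Finset.card_le_card hsub
    rwa [Finset.card_image_of_injective _ (fun i j h => (Prod.ext_iff.mp h).2),
      Finset.card_univ, Fintype.card_fin] at hle
  have hsmall : ∀ v : V, 2 ≤ (D.filter fun x => x.1 = v).card := by
    intro v
    have key : ∀ i j : Fin 4, i ≠ j → (v, i) ∈ D → (v, j) ∈ D →
        2 ≤ (D.filter fun x => x.1 = v).card := by
      intro i j hij hi hj
      have hsub : ({(v, i), (v, j)} : Finset (V × Fin 4)) ⊆ D.filter fun x => x.1 = v := by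
        intro x hx
        rcases Finset.mem_insert.mp hx with rfl | hx
        · exact Finset.mem_filter.mpr ⟨hi, rfl⟩
        · rw [Finset.mem_singleton] at hx
          subst hx
          exact Finset.mem_filter.mpr ⟨hj, rfl⟩
      have hcard : ({(v, i), (v, j)} : Finset (V × Fin 4)).card = 2 := by
        rw [Finset.card_insert_of_notMem (by simp [hij]), Finset.card_singleton]
      rw [← hcard]
      exact Finset.card_le_card hsub
    have h1 : (v, 0) ∈ D ∨ (v, 1) ∈ D :=
      hD (show (edGadget G).Adj (v, 0) (v, 1) from Or.inl ⟨rfl, Or.inl rfl⟩)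
    have h2 : (v, 2) ∈ D ∨ (v, 3) ∈ D :=
      hD (show (edGadget G).Adj (v, 2) (v, 3) from Or.inl ⟨rfl, Or.inr (Or.inl rfl)⟩)
    rcases h1 with h1 | h1 <;> rcases h2 with h2 | h2
    · exact key 0 2 (by decide) h1 h2
    · exact key 0 3 (by decide) h1 h2
    · exact key 1 2 (by decide) h1 h2
    · exact key 1 3 (by decide) h1 h2
  have hsum : ∑ v : V, (if v ∈ C' then 4 else 2) ≤ ∑ v : V, (D.filter fun x => x.1 = v).card := by
    refine Finset.sum_le_sum fun v _ => ?_
    split_ifs with h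
    · exact hbig v h
    · exact hsmall v
  have hval : ∑ v : V, (if v ∈ C' then 4 else 2) = 2 * C'.card + 2 * Fintype.card V := by
    have hite : ∀ v : V, (if v ∈ C' then 4 else 2) = (if v ∈ C' then 2 else 0) + 2 := by
      intro v
      split_ifs <;> rfl
    simp_rw [hite]
    rw [Finset.sum_add_distrib, Finset.sum_ite_mem, Finset.univ_inter, Finset.sum_const,
      Finset.sum_const, Finset.card_univ, smul_eq_mul, smul_eq_mul]
    ring
  omega

/-- Given a vertex cover `C` of `G`, the ED-gadget graph has a maximal matching of
size `|C| + |V|`. -/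
lemma edGadget_maxMatching {V : Type*} [Fintype V] (G : SimpleGraph V)
    (C : Finset V) (hC : IsVC G C) :
    ∃ M : Finset (Sym2 (V × Fin 4)), IsMaximalMatchingSet (edGadget G) M ∧
      M.card = C.card + Fintype.card V := by
  classical
  set piece : V → Finset (Sym2 (V × Fin 4)) := fun v =>
    if v ∈ C then {s((v, 0), (v, 1)), s((v, 2), (v, 3))} else {s((v, 0), (v, 2))} with hpiece
  set M : Finset (Sym2 (V × Fin 4)) := Finset.univ.biUnion piece with hM
  have hfst : ∀ v, ∀ e ∈ piece v, ∀ x, x ∈ e → x.1 = v := by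
    intro v e he x hx
    simp only [hpiece] at he
    split_ifs at he with h
    · rcases Finset.mem_insert.mp he with rfl | he
      · rcases Sym2.mem_iff.mp hx with rfl | rfl <;> rfl
      · rw [Finset.mem_singleton] at he
        subst he
        rcases Sym2.mem_iff.mp hx with rfl | rfl <;> rfl
    · rw [Finset.mem_singleton] at he
      subst he
      rcases Sym2.mem_iff.mp hx with rfl | rfl <;> rfl
  have hmatch : IsMatchingSet (edGadget G) M := by
    constructor
    · intro e he
      obtain ⟨v, -, hev⟩ := Finset.mem_biUnion.mp he
      simp only [hpiece] at hev
      split_ifs at hev with h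
      · rcases Finset.mem_insert.mp hev with rfl | hev
        · exact (edGadget G).mem_edgeSet.mpr (Or.inl ⟨rfl, Or.inl rfl⟩)
        · rw [Finset.mem_singleton] at hev
          subst hev
          exact (edGadget G).mem_edgeSet.mpr (Or.inl ⟨rfl, Or.inr (Or.inl rfl)⟩)
      · rw [Finset.mem_singleton] at hev
        subst hev
        exact (edGadget G).mem_edgeSet.mpr (Or.inl ⟨rfl, Or.inr (Or.inr rfl)⟩)
    · intro e he f hf hef x hxe hxf
      obtain ⟨v, -, hev⟩ := Finset.mem_biUnion.mp he
      obtain ⟨w, -, hfw⟩ := Finset.mem_biUnion.mp hf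
      have hvw : v = w := (hfst v e hev x hxe).symm.trans (hfst w f hfw x hxf)
      subst hvw
      simp only [hpiece] at hev hfw
      split_ifs at hev hfw with h
      · simp only [Finset.mem_insert, Finset.mem_singleton] at hev hfw
        rcases hev with rfl | rfl <;> rcases hfw with rfl | rfl
        · exact hef rfl
        · simp only [Sym2.mem_iff, Prod.mk.injEq] at hxe hxf
          rcases hxe with ⟨-, h1⟩ | ⟨-, h1⟩ <;> rcases hxf with ⟨-, h2⟩ | ⟨-, h2⟩ <;>
            (rw [h1] at h2; exact absurd h2 (by decide))
        · simp only [Sym2.mem_iff, Prod.mk.injEq] at hxe hxf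
          rcases hxe with ⟨-, h1⟩ | ⟨-, h1⟩ <;> rcases hxf with ⟨-, h2⟩ | ⟨-, h2⟩ <;>
            (rw [h1] at h2; exact absurd h2 (by decide))
        · exact hef rfl
      · rw [Finset.mem_singleton] at hev hfw
        exact hef (hev.trans hfw.symm)
  have hunmatched : ∀ x : V × Fin 4, (∀ f ∈ M, x ∉ f) → x.1 ∉ C ∧ (x.2 = 1 ∨ x.2 = 3) := by
    intro x hx
    obtain ⟨v, i⟩ := x
    have hmem : ∀ e, e ∈ piece v → e ∈ M :=
      fun e he => Finset.mem_biUnion.mpr ⟨v, Finset.mem_univ v, he⟩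
    by_cases hv : v ∈ C
    · exfalso
      have hA : s((v, 0), (v, 1)) ∈ M := hmem _ (by simp [hpiece, hv])
      have hB : s((v, 2), (v, 3)) ∈ M := hmem _ (by simp [hpiece, hv])
      fin_cases i
      · exact hx _ hA (by simp)
      · exact hx _ hA (by simp)
      · exact hx _ hB (by simp)
      · exact hx _ hB (by simp)
    · have hE : s((v, 0), (v, 2)) ∈ M := hmem _ (by simp [hpiece, hv])
      refine ⟨hv, ?_⟩
      fin_cases i
      · exact absurd (hx _ hE) (by simp)
      · simp
      · exact absurd (hx _ hE) (by simp)
      · simp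
  have hcard : M.card = C.card + Fintype.card V := by
    have hdisj : ∀ v ∈ (Finset.univ : Finset V), ∀ w ∈ (Finset.univ : Finset V), v ≠ w →
        Disjoint (piece v) (piece w) := by
      intro v _ w _ hvw
      rw [Finset.disjoint_left]
      intro e hev hew
      induction e using Sym2.ind with
      | _ a b =>
        exact hvw ((hfst v _ hev a (Sym2.mem_mk_left a b)).symm.trans
          (hfst w _ hew a (Sym2.mem_mk_left a b)))
    rw [hM, Finset.card_biUnion hdisj]
    have hpc : ∀ v : V, (piece v).card = if v ∈ C then 2 else 1 := by
      intro v
      simp only [hpiece]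
      split_ifs with h
      · rw [Finset.card_insert_of_notMem (by simp [Sym2.eq_iff, Prod.ext_iff]),
          Finset.card_singleton]
      · exact Finset.card_singleton _
    simp_rw [hpc]
    have hite : ∀ v : V, (if v ∈ C then 2 else 1) = (if v ∈ C then 1 else 0) + 1 := by
      intro v
      split_ifs <;> rfl
    simp_rw [hite]
    rw [Finset.sum_add_distrib, Finset.sum_ite_mem, Finset.univ_inter, Finset.sum_const,
      Finset.sum_const, Finset.card_univ, smul_eq_mul, smul_eq_mul, mul_one, mul_one]
  refine ⟨M, ⟨hmatch, ?_⟩, hcard⟩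
  intro e heE heM hmat
  induction e using Sym2.ind with
    | _ a b =>
      have hadj : (edGadget G).Adj a b := (edGadget G).mem_edgeSet.mp heE
      have key : ∀ x, x ∈ s(a, b) → ∀ f ∈ M, x ∉ f := by
        intro x hx f hf
        refine hmat.2 s(a, b) ?_ f ?_ (fun h => heM (by rw [h]; exact hf)) x hx
        · first
            | exact Finset.mem_insert_self _ _
            | simp
            | (convert Finset.mem_insert_self s(a, b) M using 2 <;> exact Subsingleton.elim _ _)
        · first
            | exact Finset.mem_insert_of_mem hf
            | simp [hf]
            | (convert Finset.mem_insert_of_mem hf using 2 <;> exact Subsingleton.elim _ _)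
      have ha : ∀ f ∈ M, a ∉ f := fun f hf => key a (Sym2.mem_mk_left a b) f hf
      have hb : ∀ f ∈ M, b ∉ f := fun f hf => key b (Sym2.mem_mk_right a b) f hf
      obtain ⟨haC, hai⟩ := hunmatched a ha
      obtain ⟨hbC, hbi⟩ := hunmatched b hb
      rcases hadj with ⟨h1, h2⟩ | h
      · rcases hai with h3 | h3 <;> rcases hbi with h4 | h4 <;>
          (rw [h3, h4] at h2; unfold gadgetRel at h2;
           rcases h2 with h2 | h2 | h2 <;> rw [Sym2.eq_iff] at h2 <;>
             rcases h2 with ⟨ha', hb'⟩ | ⟨ha', hb'⟩ <;>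
             first
               | exact absurd ha' (by decide)
               | exact absurd hb' (by decide))
      · rcases hC h with h' | h'
        · exact haC h'
        · exact hbC h'

/-- For the ED-gadget graph `H = edGadget G` we have `min-ed(H) = mvc(H)`,
i.e. `H` has a maximal matching `M` with `2·|M| = mvc(H)`; in fact
`min-ed(H) = 2·(mvc(G) + |V(G)|)`. -/
theorem stmt1 {V : Type*} [Fintype V] (G : SimpleGraph V) :
    minEd (edGadget G) = mvc (edGadget G) ∧
    (∃ M : Finset (Sym2 (V × Fin 4)), IsMaximalMatchingSet (edGadget G) M ∧
      2 * M.card = mvc (edGadget G)) ∧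
    minEd (edGadget G) = 2 * (mvc G + Fintype.card V) := by
  classical
  have hne : {n | ∃ C : Finset V, IsVC G C ∧ C.card = n}.Nonempty :=
    ⟨Finset.univ.card, Finset.univ, fun u w _ => Or.inl (Finset.mem_univ u), rfl⟩
  obtain ⟨Cmin, hCmin, hCcard⟩ : ∃ C : Finset V, IsVC G C ∧ C.card = mvc G :=
    Nat.sInf_mem hne
  obtain ⟨M, hMmax, hMcard⟩ := edGadget_maxMatching G Cmin hCmin
  obtain ⟨D, hD, hDle⟩ := endpoint_vc (edGadget G) M hMmax
  have h1 : mvc (edGadget G) ≤ 2 * M.card :=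
    le_trans (Nat.sInf_le ⟨D, hD, rfl⟩) hDle
  have hneH : {n | ∃ D : Finset (V × Fin 4), IsVC (edGadget G) D ∧ D.card = n}.Nonempty :=
    ⟨Finset.univ.card, Finset.univ, fun u w _ => Or.inl (Finset.mem_univ u), rfl⟩
  obtain ⟨D0, hD0, hD0card⟩ :
      ∃ D : Finset (V × Fin 4), IsVC (edGadget G) D ∧ D.card = mvc (edGadget G) :=
    Nat.sInf_mem hneH
  have h2 : 2 * (mvc G + Fintype.card V) ≤ D0.card := edGadget_vc_lower G D0 hD0
  have h3 : 2 * M.card = 2 * (mvc G + Fintype.card V) := by rw [hMcard, hCcard]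
  have h4 : minEd (edGadget G) ≤ 2 * M.card := Nat.sInf_le ⟨M, hMmax, rfl⟩
  have hneE : {n | ∃ M' : Finset (Sym2 (V × Fin 4)),
      IsMaximalMatchingSet (edGadget G) M' ∧ n = 2 * M'.card}.Nonempty :=
    ⟨2 * M.card, M, hMmax, rfl⟩
  obtain ⟨M0, hM0, hM0card⟩ :
      ∃ M' : Finset (Sym2 (V × Fin 4)), IsMaximalMatchingSet (edGadget G) M' ∧
        minEd (edGadget G) = 2 * M'.card :=
    Nat.sInf_mem hneE
  obtain ⟨D1, hD1, hD1le⟩ := endpoint_vc (edGadget G) M0 hM0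
  have h5 : mvc (edGadget G) ≤ 2 * M0.card :=
    le_trans (Nat.sInf_le ⟨D1, hD1, rfl⟩) hD1le
  refine ⟨by omega, ⟨M, hMmax, by omega⟩, by omega⟩

end
end

section
/- Let G be a finite simple graph with maximum degree Δ = max-deg(G), let H be the MDG-gadget graph of G, and let D be any vertex cover of H. Then for every edge e = {u,v} ∈ E(G), D contains at least Δ+1 of the 2(Δ+1) gadget vertices u_1^e, …, u_{Δ+1}^e, v_1^e, …, v_{Δ+1}^e; moreover, if neither u nor v belongs to D, then D contains at least Δ+2 of these gadget vertices. -/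
open scoped Classical

noncomputable section

/-- If `D` is a vertex cover of the MDG-gadget graph of `G`
(with `Δ = max-deg(G)`) then for every edge `e = {u,v}` of `G`, `D` contains at least
`Δ+1` of the `2(Δ+1)` gadget vertices `u₁ᵉ,…,u_{Δ+1}ᵉ,v₁ᵉ,…,v_{Δ+1}ᵉ`; and if neither
`u` nor `v` is in `D`, it contains at least `Δ+2` of them. -/
theorem stmt11 {V : Type*} [Fintype V] (G : SimpleGraph V)
    (D : Finset (V ⊕ ({p : V × V // G.Adj p.1 p.2} × Fin (G.maxDegree + 1))))
    (hD : IsVC (mdgGadget G G.maxDegree) D) {u v : V} (huv : G.Adj u v) :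
    G.maxDegree + 1 ≤
      (Finset.univ.filter fun i : Fin (G.maxDegree + 1) =>
        Sum.inr (⟨(u, v), huv⟩, i) ∈ D).card +
      (Finset.univ.filter fun i : Fin (G.maxDegree + 1) =>
        Sum.inr (⟨(v, u), huv.symm⟩, i) ∈ D).card ∧
    (Sum.inl u ∉ D → Sum.inl v ∉ D →
      G.maxDegree + 2 ≤
        (Finset.univ.filter fun i : Fin (G.maxDegree + 1) =>
          Sum.inr (⟨(u, v), huv⟩, i) ∈ D).card +
        (Finset.univ.filter fun i : Fin (G.maxDegree + 1) =>
          Sum.inr (⟨(v, u), huv.symm⟩, i) ∈ D).card) := by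
  set A : Finset (Fin (G.maxDegree + 1)) :=
    Finset.univ.filter fun i => Sum.inr (⟨(u, v), huv⟩, i) ∈ D with hA
  set B : Finset (Fin (G.maxDegree + 1)) :=
    Finset.univ.filter fun i => Sum.inr (⟨(v, u), huv.symm⟩, i) ∈ D with hB
  have key : (∀ i : Fin (G.maxDegree + 1), Sum.inr (⟨(u, v), huv⟩, i) ∈ D) ∨
      (∀ j : Fin (G.maxDegree + 1), Sum.inr (⟨(v, u), huv.symm⟩, j) ∈ D) := by
    by_contra h
    push_neg at h
    obtain ⟨⟨i, hi⟩, ⟨j, hj⟩⟩ := h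
    have hadj : (mdgGadget G G.maxDegree).Adj (Sum.inr (⟨(u, v), huv⟩, i))
        (Sum.inr (⟨(v, u), huv.symm⟩, j)) := ⟨rfl, rfl⟩
    rcases hD hadj with h | h
    · exact hi h
    · exact hj h
  have hu0 : Sum.inl u ∉ D → Sum.inr (⟨(u, v), huv⟩, (0 : Fin (G.maxDegree + 1))) ∈ D := by
    intro hu
    have hadj : (mdgGadget G G.maxDegree).Adj (Sum.inl u)
        (Sum.inr (⟨(u, v), huv⟩, (0 : Fin (G.maxDegree + 1)))) := ⟨rfl, rfl⟩
    rcases hD hadj with h | h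
    · exact absurd h hu
    · exact h
  have hv0 : Sum.inl v ∉ D → Sum.inr (⟨(v, u), huv.symm⟩, (0 : Fin (G.maxDegree + 1))) ∈ D := by
    intro hv
    have hadj : (mdgGadget G G.maxDegree).Adj (Sum.inl v)
        (Sum.inr (⟨(v, u), huv.symm⟩, (0 : Fin (G.maxDegree + 1)))) := ⟨rfl, rfl⟩
    rcases hD hadj with h | h
    · exact absurd h hv
    · exact h
  rcases key with hall | hall
  · have hAcard : A.card = G.maxDegree + 1 := by
      have : A = Finset.univ := by
        ext i
        simp [hA, hall i]
      rw [this, Finset.card_univ, Fintype.card_fin]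
    constructor
    · omega
    · intro hu hv
      have h0 : (0 : Fin (G.maxDegree + 1)) ∈ B := by
        simp [hB, hv0 hv]
      have : 1 ≤ B.card := Finset.card_pos.mpr ⟨0, h0⟩
      omega
  · have hBcard : B.card = G.maxDegree + 1 := by
      have : B = Finset.univ := by
        ext i
        simp [hB, hall i]
      rw [this, Finset.card_univ, Fintype.card_fin]
    constructor
    · omega
    · intro hu hv
      have h0 : (0 : Fin (G.maxDegree + 1)) ∈ A := by
        simp [hA, hu0 hu]
      have : 1 ≤ A.card := Finset.card_pos.mpr ⟨0, h0⟩
      omega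

end
end
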